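/- Conditional expectation upper bound: for agents i ≠ j with independent utilities, E[u_i | β_j u_j = max_k β_k u_k] ≤ E[u_i], assuming the conditioning event has positive probability. -/

import Mathlib

/-!
Condition on the utilities `w` of the agents other than `i`. The event that `j` has the maximal
scaled utility then becomes `β i * u i ≤ β j * w j` together with a condition on `w` alone, which
is a lower set in the value of `u i`. Since `u i` is independent of `w`, each conditional law of
`u i` is its unconditional law `ν`, and for every lower set `L` one has
`ν (L ∩ Ioi t) ≤ ν (Ioi t) * ν L` (Harris' inequality in one variable). Integrating over `w`
gives `μ (A ∩ {t < u i}) ≤ μ {t < u i} * μ A` for every `t`, and the layer-cake formula turns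
this into `∫ u i ∂μ|A ≤ ∫ u i ∂μ * μ A`.
-/

open MeasureTheory ProbabilityTheory

noncomputable def condExpEvent {Ω : Type*} [MeasurableSpace Ω] (μ : Measure Ω)
    (X : Ω → ℝ) (A : Set Ω) : ℝ :=
  (μ A).toReal⁻¹ * ∫ ω in A, X ω ∂μ

def IntervalSupport {Ω : Type*} [MeasurableSpace Ω] (μ : Measure Ω)
    (X : Ω → ℝ) (a b : ℝ) : Prop :=
  a < b ∧ μ {ω | X ω ∈ Set.Icc a b} = 1 ∧
    ∀ c d : ℝ, a ≤ c → c < d → d ≤ b → 0 < μ {ω | X ω ∈ Set.Ioo c d}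

noncomputable def resProb {Ω : Type*} [MeasurableSpace Ω] (μ : Measure Ω) {n : ℕ}
    (u : Fin n → Ω → ℝ) (β : Fin n → ℝ) (i : Fin n) : ENNReal :=
  μ {ω | β i * u i ω = ⨆ j, β j * u j ω}

def PDFBoundedAbove {Ω : Type*} [MeasurableSpace Ω] (μ : Measure Ω)
    (X : Ω → ℝ) (q : ℝ) : Prop :=
  ∀ a b : ℝ, a ≤ b → μ {ω | X ω ∈ Set.Ioc a b} ≤ ENNReal.ofReal (q * (b - a))

def PDFBoundedBelowOn {Ω : Type*} [MeasurableSpace Ω] (μ : Measure Ω)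
    (X : Ω → ℝ) (p a b : ℝ) : Prop :=
  ∀ c d : ℝ, a ≤ c → c ≤ d → d ≤ b → ENNReal.ofReal (p * (d - c)) ≤ μ {ω | X ω ∈ Set.Ioc c d}

open Set

section LowerSet

variable {α : Type*} [LinearOrder α] [MeasurableSpace α] [TopologicalSpace α]
  [OpensMeasurableSpace α] [ClosedIicTopology α]

lemma measure_inter_Ioi_le_of_isLowerSet (ν : Measure α) [IsProbabilityMeasure ν] {L : Set α}
    (hL : IsLowerSet L) (t : α) : ν (L ∩ Ioi t) ≤ ν (Ioi t) * ν L := by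
  by_cases hLt : ∃ x ∈ L, t < x
  · obtain ⟨x, hxL, htx⟩ := hLt
    have hIic : Iic t ⊆ L := fun y hy => hL (le_trans hy htx.le) hxL
    have hsplit : ν (Iic t) + ν (L ∩ Ioi t) = ν L := by
      rw [← measure_union' ((Iic_disjoint_Ioi le_rfl).mono_right inter_subset_right)
        measurableSet_Iic]
      congr 1
      ext y
      rcases le_or_gt y t with hy | hy
      · simp [hy, hIic hy]
      · simp [hy, hy.not_ge]
    have hIoi : ν (Ioi t) = 1 - ν (Iic t) := by
      rw [← compl_Iic, prob_compl_eq_one_sub measurableSet_Iic]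
    set a := ν (Iic t)
    set b := ν (L ∩ Ioi t)
    have hb : b ≤ 1 - a :=
      ENNReal.le_sub_of_add_le_left (measure_ne_top ν _) (hsplit ▸ prob_le_one)
    calc b = b * (a + (1 - a)) := by rw [add_tsub_cancel_of_le prob_le_one, mul_one]
      _ ≤ (1 - a) * a + (1 - a) * b := by
          rw [mul_add, mul_comm b (1 - a)]; gcongr
      _ = ν (Ioi t) * ν L := by rw [← mul_add, hsplit, hIoi]
  · push Not at hLt
    rw [show L ∩ Ioi t = ∅ from eq_empty_of_forall_notMem fun x hx => not_lt.mpr (hLt x hx.1) hx.2,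
      measure_empty]
    exact zero_le

namespace ProbabilityTheory

lemma IndepFun.measure_preimage_inter_lt_le {Ω β : Type*} [MeasurableSpace Ω] [MeasurableSpace β]
    {μ : Measure Ω} [IsProbabilityMeasure μ] {W : Ω → β} {X : Ω → α}
    (hW : Measurable W) (hX : Measurable X) (hWX : IndepFun W X μ) {S : Set (β × α)}
    (hS : MeasurableSet S) (hS_lower : ∀ w, IsLowerSet (Prod.mk w ⁻¹' S)) (t : α) :
    μ ((fun ω => (W ω, X ω)) ⁻¹' S ∩ {ω | t < X ω}) ≤
      μ {ω | t < X ω} * μ ((fun ω => (W ω, X ω)) ⁻¹' S) := by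
  have hWX_meas : Measurable fun ω => (W ω, X ω) := hW.prodMk hX
  have hmap : μ.map (fun ω => (W ω, X ω)) = (μ.map W).prod (μ.map X) :=
    (indepFun_iff_map_prod_eq_prod_map_map hW.aemeasurable hX.aemeasurable).mp hWX
  have : IsProbabilityMeasure (μ.map X) := Measure.isProbabilityMeasure_map hX.aemeasurable
  have hSt : MeasurableSet (S ∩ Prod.snd ⁻¹' Ioi t) := hS.inter (measurable_snd measurableSet_Ioi)
  calc μ ((fun ω => (W ω, X ω)) ⁻¹' S ∩ {ω | t < X ω})
      = ∫⁻ w, μ.map X (Prod.mk w ⁻¹' S ∩ Ioi t) ∂μ.map W := by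
        change _ = ∫⁻ w, μ.map X (Prod.mk w ⁻¹' (S ∩ Prod.snd ⁻¹' Ioi t)) ∂μ.map W
        rw [← Measure.prod_apply hSt, ← hmap, Measure.map_apply hWX_meas hSt]
        rfl
    _ ≤ ∫⁻ w, μ.map X (Ioi t) * μ.map X (Prod.mk w ⁻¹' S) ∂μ.map W :=
        lintegral_mono fun w => measure_inter_Ioi_le_of_isLowerSet _ (hS_lower w) t
    _ = μ {ω | t < X ω} * μ ((fun ω => (W ω, X ω)) ⁻¹' S) := by
        rw [lintegral_const_mul' _ _ (measure_ne_top _ _), ← Measure.prod_apply hS, ← hmap,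
          Measure.map_apply hWX_meas hS, Measure.map_apply hX measurableSet_Ioi]
        rfl

lemma iIndepFun.measure_inter_lt_le_of_isLowerSet_update {Ω ι : Type*} [MeasurableSpace Ω]
    [Fintype ι] [DecidableEq ι] {μ : Measure Ω} [IsProbabilityMeasure μ] {u : ι → Ω → α}
    (hindep : iIndepFun u μ) (hmeas : ∀ k, Measurable (u k)) {E : Set (ι → α)}
    (hE : MeasurableSet E) (i : ι) (hE_lower : ∀ v, IsLowerSet {x | Function.update v i x ∈ E})
    (t : α) :
    μ ({ω | (fun k => u k ω) ∈ E} ∩ {ω | t < u i ω}) ≤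
      μ {ω | t < u i ω} * μ {ω | (fun k => u k ω) ∈ E} := by
  set W : Ω → ({i}ᶜ : Finset ι) → α := fun ω k => u k ω
  let glue : (({i}ᶜ : Finset ι) → α) × α → ι → α := fun p k =>
    if h : k = i then p.2 else p.1 ⟨k, by simpa using h⟩
  have hglue : Measurable glue := by
    refine measurable_pi_lambda _ fun k => ?_
    by_cases h : k = i
    · simpa [glue, h] using measurable_snd
    · simp only [glue, h, dite_false]
      fun_prop
  have hglue_update (w : ({i}ᶜ : Finset ι) → α) (x y : α) :
      glue (w, y) = Function.update (glue (w, x)) i y := by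
    ext k
    by_cases h : k = i
    · subst h; simp [glue]
    · simp [glue, h]
  have hW_indep : IndepFun W (u i) μ := by
    exact (hindep.indepFun_finset ({i}ᶜ) {i} disjoint_compl_left hmeas).comp
      measurable_id (measurable_pi_apply ⟨i, Finset.mem_singleton_self i⟩)
  have hu (ω : Ω) : (fun k => u k ω) = glue (W ω, u i ω) := by
    ext k
    by_cases h : k = i
    · subst h; simp [glue]
    · simp [glue, h, W]
  simp_rw [hu]
  refine IndepFun.measure_preimage_inter_lt_le (measurable_pi_lambda W fun k => hmeas k)
    (hmeas i) hW_indep (hglue hE) (fun w => ?_) t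
  convert hE_lower (glue (w, t)) using 1
  ext y
  exact iff_of_eq (congrArg (· ∈ E) (hglue_update w t y))

end ProbabilityTheory

end LowerSet

section LayerCake

variable {Ω : Type*} [MeasurableSpace Ω] {μ : Measure Ω} [IsFiniteMeasure μ] {X : Ω → ℝ}
  {A : Set Ω}

lemma lintegral_restrict_le_lintegral_mul_of_measure_inter_lt_le (hA : MeasurableSet A)
    (hX0 : 0 ≤ᵐ[μ] X) (hX : AEMeasurable X μ)
    (h : ∀ t, μ (A ∩ {ω | t < X ω}) ≤ μ {ω | t < X ω} * μ A) :
    ∫⁻ ω in A, ENNReal.ofReal (X ω) ∂μ ≤ (∫⁻ ω, ENNReal.ofReal (X ω) ∂μ) * μ A := by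
  rw [lintegral_eq_lintegral_meas_lt _ (ae_restrict_of_ae hX0) hX.restrict,
    lintegral_eq_lintegral_meas_lt μ hX0 hX, ← lintegral_mul_const' _ _ (measure_ne_top μ A)]
  refine lintegral_mono fun t => ?_
  rw [Measure.restrict_apply' hA, inter_comm]
  exact h t

lemma condExpEvent_le_integral_of_measure_inter_lt_le (hA : MeasurableSet A)
    (hX0 : 0 ≤ᵐ[μ] X) (hX : Integrable X μ)
    (h : ∀ t, μ (A ∩ {ω | t < X ω}) ≤ μ {ω | t < X ω} * μ A) :
    condExpEvent μ X A ≤ ∫ ω, X ω ∂μ := by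
  rcases eq_or_ne (μ A).toReal 0 with hA0 | hA0
  · simpa [condExpEvent, hA0] using integral_nonneg_of_ae hX0
  rw [condExpEvent, inv_mul_le_iff₀ (ENNReal.toReal_nonneg.lt_of_ne' hA0),
    integral_eq_lintegral_of_nonneg_ae (ae_restrict_of_ae hX0) hX.1.restrict,
    integral_eq_lintegral_of_nonneg_ae hX0 hX.1, mul_comm, ← ENNReal.toReal_mul]
  exact ENNReal.toReal_mono (ENNReal.mul_ne_top hX.lintegral_lt_top.ne (measure_ne_top μ A))
    (lintegral_restrict_le_lintegral_mul_of_measure_inter_lt_le hA hX0 hX.aemeasurable h)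

end LayerCake

lemma eq_ciSup_iff_forall_le {ι α : Type*} [Finite ι] [ConditionallyCompleteLattice α]
    {f : ι → α} {j : ι} : f j = ⨆ k, f k ↔ ∀ k, f k ≤ f j := by
  have : Nonempty ι := ⟨j⟩
  exact ⟨fun h k => h ▸ le_ciSup (Finite.bddAbove_range f) k,
    fun h => le_antisymm (le_ciSup (Finite.bddAbove_range f) j) (ciSup_le h)⟩

section ScaledMax

variable {ι : Type*} (β : ι → ℝ) (j : ι)

lemma measurableSet_setOf_forall_mul_le [Countable ι] :
    MeasurableSet {v : ι → ℝ | ∀ k, β k * v k ≤ β j * v j} := by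
  simp only [ofPred_forall]
  exact MeasurableSet.iInter fun k => measurableSet_le (by fun_prop) (by fun_prop)

lemma isLowerSet_update_setOf_forall_mul_le [DecidableEq ι] {i : ι} (hij : i ≠ j)
    (hβi : 0 ≤ β i) (v : ι → ℝ) :
    IsLowerSet {x | Function.update v i x ∈ {v : ι → ℝ | ∀ k, β k * v k ≤ β j * v j}} := by
  intro x y hyx hx k
  simp only [mem_ofPred_eq, Function.update_of_ne hij.symm] at hx ⊢
  rcases eq_or_ne k i with rfl | hki
  · simpa using (mul_le_mul_of_nonneg_left hyx hβi).trans (by simpa using hx k)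
  · simpa [hki] using hx k

end ScaledMax

theorem stmt15_general {Ω : Type*} [MeasurableSpace Ω] (μ : Measure Ω) [IsProbabilityMeasure μ]
    {n : ℕ} (u : Fin n → Ω → ℝ) (hmeas : ∀ i, Measurable (u i))
    (hindep : iIndepFun u μ)
    (hrange : ∀ i ω, u i ω ∈ Set.Icc (0:ℝ) 1)
    (β : Fin n → ℝ) (hβ : ∀ j, 0 < β j)
    (i j : Fin n) (hij : i ≠ j) :
    condExpEvent μ (u i) {ω | β j * u j ω = ⨆ k, β k * u k ω} ≤ ∫ ω, u i ω ∂μ := by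
  set E := {v : Fin n → ℝ | ∀ k, β k * v k ≤ β j * v j}
  have hA : {ω | β j * u j ω = ⨆ k, β k * u k ω} = {ω | (fun k => u k ω) ∈ E} := by
    ext ω
    exact eq_ciSup_iff_forall_le (f := fun k => β k * u k ω)
  have hE : MeasurableSet E := measurableSet_setOf_forall_mul_le β j
  rw [hA]
  refine condExpEvent_le_integral_of_measure_inter_lt_le
    (measurable_pi_lambda _ hmeas hE) (ae_of_all _ fun ω => (hrange i ω).1)
    (Integrable.of_mem_Icc 0 1 (hmeas i).aemeasurable (ae_of_all _ (hrange i))) fun t => ?_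
  exact hindep.measure_inter_lt_le_of_isLowerSet_update hmeas hE i
    (isLowerSet_update_setOf_forall_mul_le β j hij (hβ i).le) t

theorem stmt15 {Ω : Type*} [MeasurableSpace Ω] (μ : Measure Ω) [IsProbabilityMeasure μ]
    {n : ℕ} (hn : 0 < n) (u : Fin n → Ω → ℝ) (hmeas : ∀ i, Measurable (u i))
    (hindep : iIndepFun u μ)
    (hrange : ∀ i ω, u i ω ∈ Set.Icc (0:ℝ) 1)
    (hatom : ∀ i (r : ℝ), μ {ω | u i ω = r} = 0)
    (β : Fin n → ℝ) (hβ : ∀ j, 0 < β j)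
    (i j : Fin n) (hij : i ≠ j)
    (hpos : 0 < μ {ω | β j * u j ω = ⨆ k, β k * u k ω}) :
    condExpEvent μ (u i) {ω | β j * u j ω = ⨆ k, β k * u k ω} ≤ ∫ ω, u i ω ∂μ :=
  stmt15_general μ u hmeas hindep hrange β hβ i j hij
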